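/- For |q| < 1 and any t, the sum over n ≥ 0 of (-1)^n t^n q^{n(n-1)/2} / (q)_n equals the infinite product (t)_∞ = ∏_{k≥0}(1 - t q^k). (Euler's second q-exponential identity.) -/

import Mathlib

open scoped BigOperators

noncomputable def qPoch (q : ℂ) (n : ℕ) : ℂ := ∏ k ∈ Finset.range n, (1 - q ^ (k + 1))

noncomputable def qPochInf (q : ℂ) : ℂ := ∏' k : ℕ, (1 - q ^ (k + 1))

noncomputable def hseries (b : ℕ) (q : ℂ) : ℂ :=
  ∑' n : ℤ, (if Odd b then (-1 : ℂ) ^ n else if 0 ≤ n then 1 else -1) *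
    q ^ ((b : ℤ) * n * (n + 1) / 2 - n)

/-!
Write `S(t)` for the series. Comparing coefficients of `tⁿ` gives the functional equation
`S(t) = (1 - t) S(qt)`, hence `S(t) = ∏_{k<N} (1 - t qᵏ) · S(t q^N)` for every `N`. As `N → ∞`
the finite products converge to the infinite product and, by dominated convergence,
`S(t q^N) → S(0) = 1`.
-/

open Filter Finset Topology

lemma one_sub_pow_succ_ne_zero {q : ℂ} (hq : ‖q‖ < 1) (k : ℕ) : 1 - q ^ (k + 1) ≠ 0 := by
  refine sub_ne_zero.mpr fun h => ?_
  have : ‖q ^ (k + 1)‖ < 1 := by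
    rw [norm_pow]
    exact pow_lt_one₀ (norm_nonneg q) hq k.succ_ne_zero
  simp [← h] at this

lemma qPoch_ne_zero {q : ℂ} (hq : ‖q‖ < 1) (n : ℕ) : qPoch q n ≠ 0 :=
  prod_ne_zero_iff.mpr fun k _ => one_sub_pow_succ_ne_zero hq k

lemma qPoch_succ (q : ℂ) (n : ℕ) : qPoch q (n + 1) = qPoch q n * (1 - q ^ (n + 1)) :=
  prod_range_succ _ n

noncomputable def eulerTerm (q t : ℂ) (n : ℕ) : ℂ :=
  (-1 : ℂ) ^ n * t ^ n * q ^ (n * (n - 1) / 2) / qPoch q n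

noncomputable def eulerSeries (q t : ℂ) : ℂ := ∑' n : ℕ, eulerTerm q t n

@[simp]
lemma eulerTerm_zero (q t : ℂ) : eulerTerm q t 0 = 1 := by simp [eulerTerm, qPoch]

lemma eulerTerm_mul (q c t : ℂ) (n : ℕ) : eulerTerm q (c * t) n = c ^ n * eulerTerm q t n := by
  simp only [eulerTerm, mul_pow]
  ring

lemma eulerTerm_succ {q : ℂ} (hq : ‖q‖ < 1) (t : ℂ) (n : ℕ) :
    eulerTerm q t (n + 1) * (1 - q ^ (n + 1)) = -t * q ^ n * eulerTerm q t n := by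
  have hexp : (n + 1) * (n + 1 - 1) / 2 = n * (n - 1) / 2 + n := by
    simp only [← Nat.choose_two_right, Nat.choose_succ_succ', Nat.choose_one_right, add_comm]
  rw [eulerTerm, eulerTerm, hexp, pow_add, qPoch_succ]
  field_simp [qPoch_ne_zero hq n, one_sub_pow_succ_ne_zero hq n]
  ring

lemma summable_norm_eulerTerm {q : ℂ} (hq : ‖q‖ < 1) (t : ℂ) :
    Summable fun n => ‖eulerTerm q t n‖ := by
  have hratio : Tendsto (fun n : ℕ => ‖t‖ * ‖q‖ ^ n / ‖1 - q ^ (n + 1)‖) atTop (𝓝 0) := by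
    have hpow := tendsto_pow_atTop_nhds_zero_of_norm_lt_one hq
    have hden : Tendsto (fun n : ℕ => ‖1 - q ^ (n + 1)‖) atTop (𝓝 1) := by
      have := (hpow.comp (tendsto_add_atTop_nat 1)).const_sub (1 : ℂ)
      simpa using this.norm
    simpa using ((hpow.norm.const_mul ‖t‖).div hden one_ne_zero).congr fun n => by simp
  refine summable_of_ratio_norm_eventually_le (one_half_lt_one (α := ℝ)) ?_
  filter_upwards [hratio.eventually_le_const one_half_pos] with n hn
  have hterm : eulerTerm q t (n + 1) = eulerTerm q t n * (-t * q ^ n / (1 - q ^ (n + 1))) := by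
    rw [mul_div_assoc', eq_div_iff (one_sub_pow_succ_ne_zero hq n), eulerTerm_succ hq]
    ring
  rw [norm_norm, norm_norm, hterm, norm_mul, mul_comm]
  simp only [norm_div, norm_mul, norm_neg, norm_pow]
  exact mul_le_mul_of_nonneg_right hn (norm_nonneg _)

lemma eulerSeries_eq_one_sub_mul {q : ℂ} (hq : ‖q‖ < 1) (t : ℂ) :
    eulerSeries q t = (1 - t) * eulerSeries q (q * t) := by
  have hs := (summable_norm_eulerTerm hq t).of_norm
  have hs' := (summable_norm_eulerTerm hq (q * t)).of_norm
  have hdiff : eulerSeries q t - eulerSeries q (q * t) = -t * eulerSeries q (q * t) :=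
    calc eulerSeries q t - eulerSeries q (q * t)
        = ∑' n, (eulerTerm q t n - eulerTerm q (q * t) n) := (hs.tsum_sub hs').symm
      _ = ∑' n, (eulerTerm q t (n + 1) - eulerTerm q (q * t) (n + 1)) := by
          rw [(hs.sub hs').tsum_eq_zero_add]
          simp
      _ = ∑' n, -t * eulerTerm q (q * t) n := by
          congr 1 with n
          rw [eulerTerm_mul, eulerTerm_mul, ← mul_assoc, ← eulerTerm_succ hq]
          ring
      _ = -t * eulerSeries q (q * t) := tsum_mul_left
  linear_combination hdiff

lemma eulerSeries_eq_prod_mul {q : ℂ} (hq : ‖q‖ < 1) (t : ℂ) (N : ℕ) :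
    eulerSeries q t = (∏ k ∈ range N, (1 - t * q ^ k)) * eulerSeries q (t * q ^ N) := by
  induction N with
  | zero => simp
  | succ N ih =>
    rw [ih, eulerSeries_eq_one_sub_mul hq (t * q ^ N), prod_range_succ]
    ring_nf

lemma eulerSeries_zero (q : ℂ) : eulerSeries q 0 = 1 := by
  rw [eulerSeries, tsum_eq_single 0 fun n hn => by simp [eulerTerm, zero_pow hn]]
  exact eulerTerm_zero q 0

lemma continuousAt_eulerSeries_zero {q : ℂ} (hq : ‖q‖ < 1) : ContinuousAt (eulerSeries q) 0 := by
  refine tendsto_tsum_of_dominated_convergence (summable_norm_eulerTerm hq 1)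
    (fun n => ?_) ?_
  · exact Continuous.tendsto (by unfold eulerTerm; fun_prop) 0
  · filter_upwards [Metric.closedBall_mem_nhds (0 : ℂ) one_pos] with t ht n
    have ht : ‖t‖ ≤ 1 := by simpa using ht
    rw [← mul_one t, eulerTerm_mul, norm_mul, norm_pow]
    exact mul_le_of_le_one_left (norm_nonneg _) (pow_le_one₀ (norm_nonneg t) ht)

theorem euler_second_q_exponential (q t : ℂ) (hq : ‖q‖ < 1) :
    ∑' n : ℕ, (-1 : ℂ) ^ n * t ^ n * q ^ (n * (n - 1) / 2) / qPoch q n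
      = ∏' k : ℕ, (1 - t * q ^ k) := by
  change eulerSeries q t = _
  have hmult : Multipliable fun k => 1 - t * q ^ k := by
    simpa [← sub_eq_add_neg] using Complex.multipliable_one_add_of_summable
      ((summable_geometric_of_norm_lt_one hq).neg.mul_left t)
  have htail : Tendsto (fun N => eulerSeries q (t * q ^ N)) atTop (𝓝 1) := by
    rw [← eulerSeries_zero q]
    refine (continuousAt_eulerSeries_zero hq).tendsto.comp ?_
    simpa using (tendsto_pow_atTop_nhds_zero_of_norm_lt_one hq).const_mul t
  have hlim := hmult.hasProd.tendsto_prod_nat.mul htail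
  rw [mul_one] at hlim
  exact tendsto_nhds_unique tendsto_const_nhds
    (hlim.congr fun N => (eulerSeries_eq_prod_mul hq t N).symm)
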